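/- Let H be a malnormal quasiconvex subgroup of a hyperbolic group G with Cayley graph Γ and limit set Λ. Then the collection 𝒥 of joins of distinct translates of Λ is a mutually cobounded collection of uniformly quasiconvex subsets of Γ: there exist C and D such that each J ∈ 𝒥 is C-quasiconvex and for all distinct J_i, J_j ∈ 𝒥 the nearest point projection of J_j onto J_i has diameter less than D. -/

import Mathlib

/-!
Common coarse-geometric definitions used to formalize statements from
"Relative Rigidity, Quasiconvexity and C-Complexes" (Mahan Mj).

We model the Cayley graph of a finitely generated group by the group itself
equipped with a word metric (the vertex set of the Cayley graph, with
bi-infinite geodesics modelled by `ℤ`-parametrized discrete geodesics), and we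
set up all basic notions (Gromov products, hyperbolicity, the Gromov boundary
via Gromov sequences, limit sets, joins, quasiconvexity, electric metrics and
relative hyperbolicity à la Farb, uniformly proper maps, quasi-isometries)
relative to an abstract distance function `d : α → α → ℝ`.
-/

open Filter Set Metric
open scoped ENNReal

noncomputable section

namespace RelRig

universe u v

variable {α β : Type*}

/-- Gromov product of `x`, `y` based at `w`. -/
def gpD (d : α → α → ℝ) (w x y : α) : ℝ := (d w x + d w y - d x y) / 2

/-- `d` satisfies the Gromov four-point condition with constant `δ`. -/
def DeltaHypD (d : α → α → ℝ) (δ : ℝ) : Prop :=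
  ∀ w x y z : α, min (gpD d w x y) (gpD d w y z) - δ ≤ gpD d w x z

/-- `d` is Gromov-hyperbolic. -/
def HypD (d : α → α → ℝ) : Prop := ∃ δ ≥ (0 : ℝ), DeltaHypD d δ

/-- distance from a point to a set. -/
def pdistD (d : α → α → ℝ) (x : α) (A : Set α) : ℝ := sInf {r | ∃ a ∈ A, r = d x a}

/-- (infimal) distance between two sets. -/
def setDistD (d : α → α → ℝ) (A B : Set α) : ℝ := sInf {r | ∃ a ∈ A, ∃ b ∈ B, r = d a b}

/-- closed `r`-neighbourhood of a set. -/
def nbdD (d : α → α → ℝ) (r : ℝ) (A : Set α) : Set α := {x | ∃ a ∈ A, d x a ≤ r}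

/-- a sequence going to infinity (a "Gromov sequence"). -/
def GromovSeqD (d : α → α → ℝ) (w : α) (s : ℕ → α) : Prop :=
  Tendsto (fun p : ℕ × ℕ => gpD d w (s p.1) (s p.2)) atTop atTop

/-- asymptoticity of Gromov sequences. -/
def bdryRelD (d : α → α → ℝ) (w : α) (s t : {u : ℕ → α // GromovSeqD d w u}) : Prop :=
  Tendsto (fun p : ℕ × ℕ => gpD d w (s.1 p.1) (t.1 p.2)) atTop atTop

/-- The Gromov boundary of `(α, d)`: asymptoticity classes of Gromov sequences. -/
def BdryD (d : α → α → ℝ) (w : α) := Quot (bdryRelD d w)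

/-- `s` converges to the boundary point `ξ`. -/
def ConvTo (d : α → α → ℝ) (w : α) (s : ℕ → α) (ξ : BdryD d w) : Prop :=
  ∃ hs : GromovSeqD d w s, Quot.mk (bdryRelD d w) ⟨s, hs⟩ = ξ

/-- the limit set of a subset `A ⊆ α` in the Gromov boundary. -/
def limitSetD (d : α → α → ℝ) (w : α) (A : Set α) : Set (BdryD d w) :=
  {ξ | ∃ s : ℕ → α, (∀ n, s n ∈ A) ∧ ConvTo d w s ξ}

/-- Gromov product of two boundary points. -/
def bgpD (d : α → α → ℝ) (w : α) (ξ η : BdryD d w) : ℝ≥0∞ :=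
  ⨆ s : {s : ℕ → α // ConvTo d w s ξ}, ⨆ t : {t : ℕ → α // ConvTo d w t η},
    Filter.liminf (fun p : ℕ × ℕ => ENNReal.ofReal (gpD d w (s.1 p.1) (t.1 p.2))) atTop

open Classical in
/-- the visual (quasi-)metric on the boundary. -/
def vdistD (d : α → α → ℝ) (w : α) (ξ η : BdryD d w) : ℝ :=
  if ξ = η then 0 else Real.exp (-(bgpD d w ξ η).toReal)

/-- visual diameter of a subset of the boundary. -/
def vdiamD (d : α → α → ℝ) (w : α) (Λ : Set (BdryD d w)) : ℝ :=
  sSup {r | ∃ ξ ∈ Λ, ∃ η ∈ Λ, r = vdistD d w ξ η}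

/-- Hausdorff distance between two subsets of the boundary (visual metric). -/
def vHdistD (d : α → α → ℝ) (w : α) (A B : Set (BdryD d w)) : ℝ :=
  max (sSup {r | ∃ a ∈ A, r = sInf {t | ∃ b ∈ B, t = vdistD d w a b}})
      (sSup {r | ∃ b ∈ B, r = sInf {t | ∃ a ∈ A, t = vdistD d w a b}})

/-- closed subsets of the boundary w.r.t. the visual metric. -/
def VClosed (d : α → α → ℝ) (w : α) (K : Set (BdryD d w)) : Prop :=
  ∀ ξ : BdryD d w, (∀ ε > (0 : ℝ), ∃ η ∈ K, vdistD d w ξ η < ε) → ξ ∈ K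

/-- A family (multiset) of boundary subsets is a discrete subset of `C_c⁰(∂X)`,
the space of closed subsets of the boundary having more than one point, with the
Hausdorff topology: the family does not accumulate (with multiplicity) at any
closed subset of the boundary having more than one point. -/
def DiscreteFamilyD {ι : Type*} (d : α → α → ℝ) (w : α) (L : ι → Set (BdryD d w)) : Prop :=
  ∀ K : Set (BdryD d w), VClosed d w K → K.Nontrivial →
    ¬ (∀ ε > (0 : ℝ), {i : ι | vHdistD d w (L i) K < ε}.Infinite)

/-- discrete geodesic of length `m` (suitable for graphs/word metrics). -/
def DiscGeodD (d : α → α → ℝ) (c : ℕ → α) (m : ℕ) : Prop :=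
  ∀ i, i ≤ m → ∀ j, j ≤ m → d (c i) (c j) = |(i : ℝ) - (j : ℝ)|

/-- discrete bi-infinite geodesic. -/
def DiscLineD (d : α → α → ℝ) (γ : ℤ → α) : Prop :=
  ∀ i j : ℤ, d (γ i) (γ j) = |(i : ℝ) - (j : ℝ)|

/-- `A` is a `K`-quasiconvex subset: every (discrete) geodesic with endpoints
in `A` stays in the `K`-neighbourhood of `A`. -/
def QCSetD (d : α → α → ℝ) (K : ℝ) (A : Set α) : Prop :=
  ∀ (c : ℕ → α) (m : ℕ), DiscGeodD d c m → c 0 ∈ A → c m ∈ A →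
    ∀ i, i ≤ m → pdistD d (c i) A ≤ K

/-- both endpoints of the bi-infinite geodesic `γ` lie in `Λ`. -/
def LineEndsInD (d : α → α → ℝ) (w : α) (γ : ℤ → α) (Λ : Set (BdryD d w)) : Prop :=
  (∃ ξ ∈ Λ, ConvTo d w (fun n : ℕ => γ (n : ℤ)) ξ) ∧
  (∃ η ∈ Λ, ConvTo d w (fun n : ℕ => γ (-(n : ℤ))) η)

/-- the join `J(Λ)`: the union of all bi-infinite geodesics with both endpoints in `Λ`. -/
def joinD (d : α → α → ℝ) (w : α) (Λ : Set (BdryD d w)) : Set α :=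
  {p | ∃ γ : ℤ → α, DiscLineD d γ ∧ LineEndsInD d w γ Λ ∧ p ∈ Set.range γ}

/-- a nearest-point projection onto `A`. -/
def IsNearestProjD (d : α → α → ℝ) (A : Set α) (P : α → α) : Prop :=
  ∀ x : α, P x ∈ A ∧ ∀ a ∈ A, d x (P x) ≤ d x a

/-- uniformly proper pairing of two collections of subsets (Schwarz, Mj). -/
def UProperD {ι κ : Type*} (d₁ : α → α → ℝ) (d₂ : β → β → ℝ)
    (J₁ : ι → Set α) (J₂ : κ → Set β) (φ : ι → κ) : Prop :=
  ∃ f : ℕ → ℕ, ∀ (n : ℕ) (i i' : ι),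
    (setDistD d₁ (J₁ i) (J₁ i') ≤ (n : ℝ) →
      setDistD d₂ (J₂ (φ i)) (J₂ (φ i')) ≤ (f n : ℝ)) ∧
    (setDistD d₂ (J₂ (φ i)) (J₂ (φ i')) ≤ (n : ℝ) →
      setDistD d₁ (J₁ i) (J₁ i') ≤ (f n : ℝ))

/-- `q` pairs the collections `J₁`, `J₂` as `φ` does. -/
def PairsAsD {ι κ : Type*} (d₁ : α → α → ℝ) (d₂ : β → β → ℝ)
    (q : α → β) (J₁ : ι → Set α) (J₂ : κ → Set β) (φ : ι → κ) : Prop :=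
  ∃ h : ℕ → ℕ, ∀ (n : ℕ) (p : α) (i : ι),
    pdistD d₁ p (J₁ i) ≤ (n : ℝ) → pdistD d₂ (q p) (J₂ (φ i)) ≤ (h n : ℝ)

/-- quasi-isometry between `(α, d₁)` and `(β, d₂)`. -/
def QIMapD (d₁ : α → α → ℝ) (d₂ : β → β → ℝ) (q : α → β) : Prop :=
  ∃ lam C : ℝ, 1 ≤ lam ∧ 0 ≤ C ∧
    (∀ x y : α, d₂ (q x) (q y) ≤ lam * d₁ x y + C ∧ d₁ x y ≤ lam * d₂ (q x) (q y) + C) ∧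
    (∀ z : β, ∃ x : α, d₂ z (q x) ≤ C)

/-! ### Word metrics, quasiconvex subgroups, limit sets of cosets -/

section Groups
variable {G : Type*} [Group G]

/-- the word metric associated to a (symmetrized) generating set `S`. -/
def wdist (S : Set G) (g h : G) : ℝ :=
  sInf {r | ∃ l : List G, (∀ x ∈ l, x ∈ S ∨ x⁻¹ ∈ S) ∧ l.prod = g⁻¹ * h ∧ r = (l.length : ℝ)}

/-- the left coset `gH` as a subset of `G`. -/
def cosetSet (H : Subgroup G) (g : G) : Set G := {x | g⁻¹ * x ∈ H}

/-- `R` contains exactly one representative of each left coset of `H`. -/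
def IsCosetReps (H : Subgroup G) (R : Set G) : Prop :=
  ∀ g : G, ∃! r : G, r ∈ R ∧ g⁻¹ * r ∈ H

/-- the translate `gΛ(H)` of the limit set of `H` in the Gromov boundary:
the limit set of the coset `gH`. -/
def cosetLimitSet (S : Set G) (H : Subgroup G) (g : G) : Set (BdryD (wdist S) (1 : G)) :=
  limitSetD (wdist S) 1 (cosetSet H g)

/-- the join `J(gΛ(H))` of the translate `gΛ(H)` of the limit set of `H`. -/
def cosetJoin (S : Set G) (H : Subgroup G) (g : G) : Set G :=
  joinD (wdist S) 1 (cosetLimitSet S H g)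

/-- quasiconvex subgroup w.r.t. the word metric of `S`. -/
def QCSubgroup (S : Set G) (H : Subgroup G) : Prop :=
  ∃ C ≥ (0 : ℝ), QCSetD (wdist S) C (H : Set G)

/-- malnormal subgroup: `gHg⁻¹ ∩ H` is trivial for `g ∉ H`. -/
def Malnormal (H : Subgroup G) : Prop :=
  ∀ g : G, g ∉ H → ∀ x : G, x ∈ H → g * x * g⁻¹ ∈ H → x = 1

end Groups

/-! ### Relative hyperbolicity (Farb: electric space + bounded penetration) -/

section RelHyp
variable {α : Type*}

open Classical in
/-- cost of one step of an electric chain: travelling within a horosphere-like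
set costs at most `1` (passing through the cone point). -/
def stepCost (d : α → α → ℝ) (ℋ : Set (Set α)) (a b : α) : ℝ :=
  if ∃ H ∈ ℋ, a ∈ H ∧ b ∈ H then min 1 (d a b) else d a b

/-- electric length of the portion `[i, j]` of a chain. -/
def chainLen (d : α → α → ℝ) (ℋ : Set (Set α)) (p : ℕ → α) (i j : ℕ) : ℝ :=
  ∑ k ∈ Finset.Ico i j, stepCost d ℋ (p k) (p (k + 1))

/-- the electric (coned-off) pseudo-metric of Farb's electric space. -/
def elDist (d : α → α → ℝ) (ℋ : Set (Set α)) (x y : α) : ℝ :=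
  sInf {r | ∃ (n : ℕ) (p : ℕ → α), p 0 = x ∧ p n = y ∧ r = chainLen d ℋ p 0 n}

/-- weak relative hyperbolicity: the electric space is hyperbolic. -/
def WeakRelHyp (d : α → α → ℝ) (ℋ : Set (Set α)) : Prop := HypD (elDist d ℋ)

/-- an electric `P`-quasigeodesic chain. -/
def ElQG (d : α → α → ℝ) (ℋ : Set (Set α)) (P : ℝ) (p : ℕ → α) (n : ℕ) : Prop :=
  ∀ i j : ℕ, i ≤ j → j ≤ n → chainLen d ℋ p i j ≤ P * elDist d ℋ (p i) (p j) + P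

/-- the chain does not return to the `ε`-neighbourhood of any horosphere-like
set after leaving it. -/
def NoBacktrack (d : α → α → ℝ) (ℋ : Set (Set α)) (ε : ℝ) (p : ℕ → α) (n : ℕ) : Prop :=
  ∀ H ∈ ℋ, ∀ i j k : ℕ, i < j → j < k → k ≤ n →
    p i ∈ nbdD d ε H → p k ∈ nbdD d ε H → p j ∈ nbdD d ε H

/-- the chain meets `S`. -/
def MeetsChain (p : ℕ → α) (n : ℕ) (S : Set α) : Prop := ∃ i ≤ n, p i ∈ S

/-- `i` is the entry point of the chain into the `ε`-neighbourhood of `H`. -/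
def IsEntry (d : α → α → ℝ) (ε : ℝ) (H : Set α) (p : ℕ → α) (n i : ℕ) : Prop :=
  i ≤ n ∧ p i ∈ nbdD d ε H ∧ ∀ j, j < i → p j ∉ nbdD d ε H

/-- `i` is the exit point of the chain from the `ε`-neighbourhood of `H`. -/
def IsExit (d : α → α → ℝ) (ε : ℝ) (H : Set α) (p : ℕ → α) (n i : ℕ) : Prop :=
  i ≤ n ∧ p i ∈ nbdD d ε H ∧ ∀ j, i < j → j ≤ n → p j ∉ nbdD d ε H

/-- coarse intrinsic path-metric of a subset `S`. -/
def inDist (d : α → α → ℝ) (S : Set α) (x y : α) : ℝ :=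
  sInf {r | ∃ (n : ℕ) (p : ℕ → α), p 0 = x ∧ p n = y ∧ (∀ i, i ≤ n → p i ∈ S) ∧
    (∀ i, i < n → d (p i) (p (i + 1)) ≤ 1) ∧
    r = ∑ k ∈ Finset.range n, d (p k) (p (k + 1))}

/-- Bounded penetration: electric quasigeodesics without backtracking with the
same endpoints have similar intersection patterns with horosphere-like sets. -/
def BddPenetration (d : α → α → ℝ) (ℋ : Set (Set α)) : Prop :=
  ∀ P ≥ (1 : ℝ), ∃ ε ≥ (0 : ℝ), ∃ D ≥ (0 : ℝ),
    ∀ (p q : ℕ → α) (n m : ℕ), p 0 = q 0 → p n = q m →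
      ElQG d ℋ P p n → ElQG d ℋ P q m →
      NoBacktrack d ℋ ε p n → NoBacktrack d ℋ ε q m →
      ∀ H ∈ ℋ,
        (¬ MeetsChain q m (nbdD d ε H) →
          ∀ i j, IsEntry d ε H p n i → IsExit d ε H p n j →
            inDist d (nbdD d ε H) (p i) (p j) ≤ D) ∧
        (MeetsChain q m (nbdD d ε H) →
          (∀ i j, IsEntry d ε H p n i → IsEntry d ε H q m j →
            inDist d (nbdD d ε H) (p i) (q j) ≤ D) ∧
          (∀ i j, IsExit d ε H p n i → IsExit d ε H q m j →
            inDist d (nbdD d ε H) (p i) (q j) ≤ D))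

/-- the collection `ℋ` is uniformly separated. -/
def UnifSeparated (d : α → α → ℝ) (ℋ : Set (Set α)) : Prop :=
  ∃ ε > (0 : ℝ), ∀ H₁ ∈ ℋ, ∀ H₂ ∈ ℋ, H₁ ≠ H₂ → ε ≤ setDistD d H₁ H₂

/-- strong relative hyperbolicity (Farb's definition; equivalent to Gromov's
definition via hyperbolic cones, by Bowditch). -/
def StrongRelHyp (d : α → α → ℝ) (ℋ : Set (Set α)) : Prop :=
  UnifSeparated d ℋ ∧ WeakRelHyp d ℋ ∧ BddPenetration d ℋ

end RelHyp

/-! ### Geodesic metric spaces, CAT(0) spaces, flats, symmetric spaces -/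

section MetricGeo
variable {X : Type*} [MetricSpace X]

/-- `γ` is a unit-speed parametrization of a geodesic from `x` to `y`. -/
def GeodParam (γ : ℝ → X) (x y : X) : Prop :=
  γ 0 = x ∧ γ (dist x y) = y ∧
    ∀ s ∈ Icc (0 : ℝ) (dist x y), ∀ t ∈ Icc (0 : ℝ) (dist x y), dist (γ s) (γ t) = |s - t|

/-- `s` is (the image of) a geodesic segment from `x` to `y`. -/
def IsGeodSeg (x y : X) (s : Set X) : Prop :=
  ∃ γ : ℝ → X, GeodParam γ x y ∧ s = γ '' Icc (0 : ℝ) (dist x y)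

/-- geodesic metric space. -/
def GeodesicSpace (X : Type*) [MetricSpace X] : Prop := ∀ x y : X, ∃ s : Set X, IsGeodSeg x y s

/-- `A` is a `K`-quasiconvex subset of the metric space `X`. -/
def QCSet (K : ℝ) (A : Set X) : Prop :=
  ∀ x ∈ A, ∀ y ∈ A, ∀ s : Set X, IsGeodSeg x y s → ∀ p ∈ s, Metric.infDist p A ≤ K

/-- `γ` is a bi-infinite (unit-speed) geodesic. -/
def IsGeodLine (γ : ℝ → X) : Prop := ∀ a b : ℝ, dist (γ a) (γ b) = |a - b|

/-- both endpoints of the geodesic line `γ` lie in `Λ`. -/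
def lineEndsIn (w : X) (γ : ℝ → X) (Λ : Set (BdryD (fun x y : X => dist x y) w)) : Prop :=
  (∃ ξ ∈ Λ, ConvTo (fun x y : X => dist x y) w (fun n : ℕ => γ (n : ℝ)) ξ) ∧
  (∃ η ∈ Λ, ConvTo (fun x y : X => dist x y) w (fun n : ℕ => γ (-(n : ℝ))) η)

/-- the join of `Λ ⊆ ∂X`: the union of bi-infinite geodesics with endpoints in `Λ`. -/
def joinR (w : X) (Λ : Set (BdryD (fun x y : X => dist x y) w)) : Set X :=
  {p | ∃ γ : ℝ → X, IsGeodLine γ ∧ lineEndsIn w γ Λ ∧ p ∈ Set.range γ}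

/-- CAT(0) space, via the CN (Bruhat–Tits) midpoint inequality. -/
def CAT0 (X : Type*) [MetricSpace X] : Prop :=
  GeodesicSpace X ∧ ∀ x y z m : X, dist y m = dist y z / 2 → dist z m = dist y z / 2 →
    dist x m ^ 2 ≤ (dist x y ^ 2 + dist x z ^ 2) / 2 - dist y z ^ 2 / 4

/-- a `k`-flat: an isometrically embedded copy of Euclidean `k`-space. -/
def FlatOfDim (k : ℕ) (F : Set X) : Prop :=
  ∃ f : EuclideanSpace ℝ (Fin k) → X, Isometry f ∧ Set.range f = F

/-- a flat (of dimension at least 2). -/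
def IsFlat2 (F : Set X) : Prop := ∃ k : ℕ, 2 ≤ k ∧ FlatOfDim k F

/-- a maximal flat. -/
def IsMaxFlat (F : Set X) : Prop := IsFlat2 F ∧ ∀ F' : Set X, IsFlat2 F' → F ⊆ F' → F' = F

/-- isolated flats: every flat is uniformly close to a maximal one, and
neighbourhoods of distinct maximal flats have uniformly bounded overlap. -/
def IsolatedFlats (X : Type*) [MetricSpace X] : Prop :=
  (∃ D ≥ (0 : ℝ), ∀ F : Set X, IsFlat2 F →
    ∃ F' : Set X, IsMaxFlat F' ∧ ∀ x ∈ F, Metric.infDist x F' ≤ D) ∧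
  (∀ ρ ≥ (0 : ℝ), ∃ κ ≥ (0 : ℝ), ∀ F F' : Set X, IsMaxFlat F → IsMaxFlat F' → F ≠ F' →
    ∀ x y : X, Metric.infDist x F ≤ ρ → Metric.infDist x F' ≤ ρ →
      Metric.infDist y F ≤ ρ → Metric.infDist y F' ≤ ρ → dist x y ≤ κ)

/-- a (globally) symmetric space of non-positive curvature: a CAT(0) space with
a geodesic point-symmetry at every point. -/
def SymmSpaceNonpos (X : Type*) [MetricSpace X] : Prop :=
  CAT0 X ∧ ∀ x : X, ∃ σ : X ≃ᵢ X, σ x = x ∧ ∀ y : X, dist y (σ y) = 2 * dist x y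

/-- `X` has rank `r`: it contains an `r`-flat but no `(r+1)`-flat. -/
def HasRank (X : Type*) [MetricSpace X] (r : ℕ) : Prop :=
  (∃ F : Set X, FlatOfDim r F) ∧ ∀ F : Set X, ¬ FlatOfDim (r + 1) F

end MetricGeo

/-! ### Group actions -/

/-- a geometric action: by isometries, metrically proper and cobounded. -/
def GeometricAction (G : Type*) [Group G] (X : Type*) [MetricSpace X] [MulAction G X] : Prop :=
  (∀ g : G, Isometry (fun x : X => g • x)) ∧
  (∀ x₀ : X, ∀ r : ℝ, {g : G | dist x₀ (g • x₀) ≤ r}.Finite) ∧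
  (∀ x₀ : X, ∃ C : ℝ, ∀ x : X, ∃ g : G, dist x (g • x₀) ≤ C)

/-- `𝒥` is the `G`-equivariant family of lifts of a maximal totally geodesic
torus (of dimension `r = rank`) in the compact locally symmetric space `X/G`:
an orbit of a periodic `r`-flat. -/
def TorusLiftFamily (G : Type*) [Group G] {X : Type*} [MetricSpace X] [MulAction G X]
    (r : ℕ) (𝒥 : Set (Set X)) : Prop :=
  (∀ J ∈ 𝒥, FlatOfDim r J) ∧
  (∃ F₀ ∈ 𝒥, 𝒥 = {J : Set X | ∃ g : G, J = (fun x : X => g • x) '' F₀}) ∧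
  (∃ C ≥ (0 : ℝ), ∀ J ∈ 𝒥, ∀ x ∈ J, ∀ y ∈ J,
    ∃ g : G, (fun z : X => g • z) '' J = J ∧ dist x (g • y) ≤ C)

/-! ### Convergence groups, annulus systems and cross-ratios (Bowditch) -/

/-- the space of distinct triples of `M`. -/
def distinctTriples (M : Type*) : Set (M × M × M) :=
  {p | p.1 ≠ p.2.1 ∧ p.1 ≠ p.2.2 ∧ p.2.1 ≠ p.2.2}

/-- the diagonal action on triples. -/
def tripleAct {G M : Type*} [Group G] [MulAction G M] (g : G) (p : M × M × M) : M × M × M :=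
  (g • p.1, g • p.2.1, g • p.2.2)

/-- a uniform convergence group action: the action on the space of distinct
triples is properly discontinuous and cocompact. -/
def UniformConvergenceAction (G : Type*) [Group G] (M : Type*) [TopologicalSpace M]
    [MulAction G M] : Prop :=
  (∀ g : G, Continuous (fun x : M => g • x)) ∧
  (∀ K : Set (M × M × M), K ⊆ distinctTriples M → IsCompact K →
    {g : G | (tripleAct g '' K ∩ K).Nonempty}.Finite) ∧
  (∃ K : Set (M × M × M), K ⊆ distinctTriples M ∧ IsCompact K ∧
    ∀ p ∈ distinctTriples M, ∃ g : G, tripleAct g p ∈ K)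

/-- an (unconstrained) ordered pair of subsets of `M`. -/
structure Ann (M : Type*) where
  minus : Set M
  plus : Set M

/-- `A` is an annulus: an ordered pair of disjoint closed subsets not covering `M`. -/
def IsAnnulusOn (M : Type*) [TopologicalSpace M] (A : Ann M) : Prop :=
  IsClosed A.minus ∧ IsClosed A.plus ∧ Disjoint A.minus A.plus ∧ A.minus ∪ A.plus ≠ Set.univ

/-- translate of an annulus. -/
def annAct {G M : Type*} [Group G] [MulAction G M] (g : G) (A : Ann M) : Ann M :=
  ⟨(fun x : M => g • x) '' A.minus, (fun x : M => g • x) '' A.plus⟩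

/-- a nested chain of `m` annuli of `𝒜` separating `K` from `L`:
`K < A₁ < ⋯ < A_m < L`. -/
def SepChain {M : Type*} [TopologicalSpace M] (𝒜 : Set (Ann M)) (K L : Set M) (m : ℕ) : Prop :=
  m = 0 ∨ ∃ A : ℕ → Ann M, (∀ i, i < m → A i ∈ 𝒜) ∧
    K ⊆ interior (A 0).minus ∧ L ⊆ interior (A (m - 1)).plus ∧
    ∀ i, i + 1 < m → interior (A i).minus ∪ interior (A (i + 1)).plus = Set.univ

/-- the annular cross-ratio `(K|L)_𝒜 ∈ ℕ ∪ {∞}`. -/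
def crossRatioAnn {M : Type*} [TopologicalSpace M] (𝒜 : Set (Ann M)) (K L : Set M) : ℕ∞ :=
  sSup {n : ℕ∞ | ∃ m : ℕ, n = (m : ℕ∞) ∧ SepChain 𝒜 K L m}

/-- the limit set of a subgroup of a convergence group. -/
def convLimitSet {G : Type*} [Group G] {M : Type*} [TopologicalSpace M] [MulAction G M]
    (H : Subgroup G) : Set M :=
  {ξ : M | ∃ h : ℕ → H, Function.Injective h ∧
    ∃ x : M, Tendsto (fun n => (h n : G) • x) atTop (nhds ξ)}

/-- discreteness of a family (multiset) of subsets of a metrizable compactum `M`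
in the Hausdorff topology on the space of closed subsets of `M` with more than
one point. -/
def DiscreteFamilyM {ι M : Type*} [MetricSpace M] (L : ι → Set M) : Prop :=
  ∀ K : Set M, IsClosed K → K.Nontrivial →
    ¬ (∀ ε > (0 : ℝ), {i : ι | Metric.hausdorffDist (L i) K < ε}.Infinite)

/-- uniform properness of a pairing with respect to annular cross-ratios. -/
def UProperCRFam {ι κ M₁ M₂ : Type*} [TopologicalSpace M₁] [TopologicalSpace M₂]
    (𝒜₁ : Set (Ann M₁)) (𝒜₂ : Set (Ann M₂))
    (L₁ : ι → Set M₁) (L₂ : κ → Set M₂) (φ : ι → κ) : Prop :=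
  ∃ f : ℕ → ℕ, ∀ (n : ℕ) (i i' : ι),
    (crossRatioAnn 𝒜₁ (L₁ i) (L₁ i') ≤ (n : ℕ∞) →
      crossRatioAnn 𝒜₂ (L₂ (φ i)) (L₂ (φ i')) ≤ (f n : ℕ∞)) ∧
    (crossRatioAnn 𝒜₂ (L₂ (φ i)) (L₂ (φ i')) ≤ (n : ℕ∞) →
      crossRatioAnn 𝒜₁ (L₁ i) (L₁ i') ≤ (f n : ℕ∞))

/-! ### Auxiliary development -/

section Aux

variable {G : Type*} [Group G] {S : Set G}

/-- The defining set of `wdist`. -/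
private def wSet (S : Set G) (g h : G) : Set ℝ :=
  {r | ∃ l : List G, (∀ x ∈ l, x ∈ S ∨ x⁻¹ ∈ S) ∧ l.prod = g⁻¹ * h ∧ r = (l.length : ℝ)}

private lemma wdist_def (g h : G) : wdist S g h = sInf (wSet S g h) := rfl

private lemma nat_isLeast {T : Set ℝ} (hne : T.Nonempty)
    (hnat : ∀ r ∈ T, ∃ n : ℕ, r = (n : ℝ)) : IsLeast T (sInf T) := by
  obtain ⟨r₀, hr₀⟩ := hne
  have hNne : {n : ℕ | (n : ℝ) ∈ T}.Nonempty := by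
    obtain ⟨n, rfl⟩ := hnat r₀ hr₀; exact ⟨n, hr₀⟩
  have h1 : IsLeast T ((sInf {n : ℕ | (n : ℝ) ∈ T} : ℕ) : ℝ) := by
    constructor
    · exact Nat.sInf_mem hNne
    · intro r hr
      obtain ⟨n, rfl⟩ := hnat r hr
      exact_mod_cast Nat.sInf_le hr
  rw [h1.csInf_eq]; exact h1

private lemma exists_word (hSgen : Subgroup.closure S = ⊤) (g : G) :
    ∃ l : List G, (∀ x ∈ l, x ∈ S ∨ x⁻¹ ∈ S) ∧ l.prod = g := by
  have hg : g ∈ Submonoid.closure (S ∪ S⁻¹) := by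
    rw [← Subgroup.closure_toSubmonoid, Subgroup.mem_toSubmonoid, hSgen]
    trivial
  obtain ⟨l, hl, hp⟩ := Submonoid.exists_list_of_mem_closure hg
  refine ⟨l, fun x hx => ?_, hp⟩
  rcases hl x hx with h | h
  · exact Or.inl h
  · exact Or.inr (Set.mem_inv.mp h)

private lemma wSet_nat : ∀ r ∈ wSet S g h, ∃ n : ℕ, r = (n : ℝ) := by
  rintro r ⟨l, -, -, rfl⟩; exact ⟨l.length, rfl⟩

private lemma wdist_isLeast (hSgen : Subgroup.closure S = ⊤) (g h : G) :
    IsLeast (wSet S g h) (wdist S g h) := by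
  rw [wdist_def]
  refine nat_isLeast ?_ wSet_nat
  obtain ⟨l, hl, hp⟩ := exists_word hSgen (g⁻¹ * h)
  exact ⟨l.length, l, hl, hp, rfl⟩

private lemma wdist_le_length (hSgen : Subgroup.closure S = ⊤) {g h : G} {l : List G}
    (hl : ∀ x ∈ l, x ∈ S ∨ x⁻¹ ∈ S) (hp : l.prod = g⁻¹ * h) :
    wdist S g h ≤ (l.length : ℝ) :=
  (wdist_isLeast hSgen g h).2 ⟨l, hl, hp, rfl⟩

private lemma exists_min_word (hSgen : Subgroup.closure S = ⊤) (g h : G) :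
    ∃ l : List G, (∀ x ∈ l, x ∈ S ∨ x⁻¹ ∈ S) ∧ l.prod = g⁻¹ * h ∧
      (l.length : ℝ) = wdist S g h := by
  obtain ⟨l, hl, hp, hr⟩ := (wdist_isLeast hSgen g h).1
  exact ⟨l, hl, hp, hr.symm⟩

private lemma wdist_nat (hSgen : Subgroup.closure S = ⊤) (g h : G) :
    ∃ n : ℕ, wdist S g h = (n : ℝ) := by
  obtain ⟨l, -, -, hr⟩ := exists_min_word hSgen g h
  exact ⟨l.length, hr.symm⟩

private lemma wdist_nonneg (hSgen : Subgroup.closure S = ⊤) (g h : G) :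
    0 ≤ wdist S g h := by
  obtain ⟨n, hn⟩ := wdist_nat hSgen g h
  rw [hn]; positivity

private lemma wdist_self (hSgen : Subgroup.closure S = ⊤) (g : G) : wdist S g g = 0 := by
  refine le_antisymm ?_ (wdist_nonneg hSgen g g)
  have := wdist_le_length (g := g) (h := g) hSgen (l := []) (by simp) (by simp)
  simpa using this

private lemma wdist_comm_le (hSgen : Subgroup.closure S = ⊤) (g h : G) :
    wdist S g h ≤ wdist S h g := by
  obtain ⟨l, hl, hp, hr⟩ := exists_min_word hSgen h g
  have hcond : ∀ x ∈ (l.map fun y => y⁻¹).reverse, x ∈ S ∨ x⁻¹ ∈ S := by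
    intro x hx
    rw [List.mem_reverse, List.mem_map] at hx
    obtain ⟨y, hy, rfl⟩ := hx
    rcases hl y hy with h' | h'
    · right; simpa using h'
    · left; exact h'
  have hprod : ((l.map fun y => y⁻¹).reverse).prod = g⁻¹ * h := by
    rw [← List.prod_inv_reverse, hp]; simp
  have := wdist_le_length hSgen hcond hprod
  simpa [hr] using this

private lemma wdist_comm (hSgen : Subgroup.closure S = ⊤) (g h : G) :
    wdist S g h = wdist S h g :=
  le_antisymm (wdist_comm_le hSgen g h) (wdist_comm_le hSgen h g)

private lemma wdist_triangle (hSgen : Subgroup.closure S = ⊤) (g h k : G) :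
    wdist S g k ≤ wdist S g h + wdist S h k := by
  obtain ⟨l₁, hl₁, hp₁, hr₁⟩ := exists_min_word hSgen g h
  obtain ⟨l₂, hl₂, hp₂, hr₂⟩ := exists_min_word hSgen h k
  have hcond : ∀ x ∈ l₁ ++ l₂, x ∈ S ∨ x⁻¹ ∈ S := by
    intro x hx; rcases List.mem_append.mp hx with h' | h'
    exacts [hl₁ x h', hl₂ x h']
  have hprod : (l₁ ++ l₂).prod = g⁻¹ * k := by
    rw [List.prod_append, hp₁, hp₂]; group
  have := wdist_le_length hSgen hcond hprod
  rw [List.length_append] at this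
  push_cast at this
  linarith [this]

private lemma wdist_linv (u g h : G) : wdist S (u * g) (u * h) = wdist S g h := by
  have : (u * g)⁻¹ * (u * h) = g⁻¹ * h := by group
  simp only [wdist, this]

end Aux
section Aux2

variable {G : Type*} [Group G] {S : Set G}

private lemma wdist_base (a b : G) : wdist S a b = wdist S 1 (a⁻¹ * b) := by
  have h := wdist_linv (S := S) a⁻¹ a b
  simpa using h.symm

private lemma abs_cast_sub_of_le {i j : ℕ} (h : i ≤ j) : |(i : ℝ) - (j : ℝ)| = (j : ℝ) - i := by
  have h' : (i : ℝ) ≤ j := by exact_mod_cast h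
  rw [abs_sub_comm, abs_of_nonneg (by linarith)]

private lemma exists_geod (hSgen : Subgroup.closure S = ⊤) (x y : G) :
    ∃ (c : ℕ → G) (m : ℕ), DiscGeodD (wdist S) c m ∧ c 0 = x ∧ c m = y ∧
      (m : ℝ) = wdist S x y := by
  obtain ⟨l, hl, hp, hr⟩ := exists_min_word hSgen x y
  set c : ℕ → G := fun i => x * (l.take i).prod with hc
  have hc0 : c 0 = x := by simp [hc]
  have hcm : c l.length = y := by
    simp only [hc, List.take_length, hp]
    group
  have hub : ∀ i j : ℕ, i ≤ j → j ≤ l.length → wdist S (c i) (c j) ≤ (j : ℝ) - i := by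
    intro i j hij hj
    have htake : l.take j = l.take i ++ (l.drop i).take (j - i) := by
      have h' : i + (j - i) = j := by omega
      rw [← List.take_add, h']
    have hseg : (l.take i).prod⁻¹ * (l.take j).prod = ((l.drop i).take (j - i)).prod := by
      rw [htake, List.prod_append]; group
    have hcond : ∀ z ∈ (l.drop i).take (j - i), z ∈ S ∨ z⁻¹ ∈ S := fun z hz =>
      hl z (List.drop_subset i l (List.take_subset _ _ hz))
    have hlen : ((l.drop i).take (j - i)).length = j - i := by
      rw [List.length_take, List.length_drop]; omega
    have hprod : ((l.drop i).take (j - i)).prod = (c i)⁻¹ * (c j) := by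
      rw [← hseg]
      simp only [hc]
      group
    have := wdist_le_length hSgen hcond hprod
    rw [hlen] at this
    calc wdist S (c i) (c j) ≤ ((j - i : ℕ) : ℝ) := this
      _ = (j : ℝ) - i := by push_cast [Nat.cast_sub hij]; ring
  have hlb : ∀ i j : ℕ, i ≤ j → j ≤ l.length → (j : ℝ) - i ≤ wdist S (c i) (c j) := by
    intro i j hij hj
    have t1 : wdist S x y ≤ wdist S x (c i) + wdist S (c i) (c j) + wdist S (c j) y := by
      have := wdist_triangle hSgen x (c i) (c j)
      have := wdist_triangle hSgen x (c j) y
      linarith [wdist_triangle hSgen x (c i) (c j), wdist_triangle hSgen x (c j) y]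
    have t2 : wdist S x (c i) ≤ (i : ℝ) := by
      have := hub 0 i (by omega) (le_trans hij hj); rw [hc0] at this; simpa using this
    have t3 : wdist S (c j) y ≤ (l.length : ℝ) - j := by
      have := hub j l.length hj le_rfl; rwa [hcm] at this
    linarith [hr.symm ▸ t1]
  refine ⟨c, l.length, ?_, hc0, hcm, hr⟩
  intro i hi j hj
  rcases le_total i j with hij | hij
  · rw [abs_cast_sub_of_le hij]
    exact le_antisymm (hub i j hij hj) (hlb i j hij hj)
  · rw [abs_sub_comm, abs_cast_sub_of_le hij, wdist_comm hSgen]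
    exact le_antisymm (hub j i hij hi) (hlb j i hij hi)

private lemma gp_sym (hSgen : Subgroup.closure S = ⊤) (w x y : G) :
    gpD (wdist S) w x y = gpD (wdist S) w y x := by
  simp only [gpD]
  rw [wdist_comm hSgen x y]; ring

private lemma gp_base (hSgen : Subgroup.closure S = ⊤) (w w' x y : G) :
    gpD (wdist S) w' x y - wdist S w' w ≤ gpD (wdist S) w x y := by
  have h1 : wdist S w' x ≤ wdist S w' w + wdist S w x := wdist_triangle hSgen _ _ _
  have h2 : wdist S w' y ≤ wdist S w' w + wdist S w y := wdist_triangle hSgen _ _ _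
  simp only [gpD]; linarith

private lemma gp_linv (u w x y : G) :
    gpD (wdist S) (u * w) (u * x) (u * y) = gpD (wdist S) w x y := by
  simp only [gpD, wdist_linv]

private lemma close_point (hSgen : Subgroup.closure S = ⊤) {δ : ℝ}
    (hδ : DeltaHypD (wdist S) δ) {c : ℕ → G} {m : ℕ}
    (hc : DiscGeodD (wdist S) c m) (w : G) :
    ∃ i ≤ m, wdist S w (c i) ≤ gpD (wdist S) w (c 0) (c m) + 2 * δ + 1 := by
  set d := wdist S with hd
  have hxy : d (c 0) (c m) = (m : ℝ) := by
    have := hc 0 (by omega) m le_rfl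
    rw [this, abs_cast_sub_of_le (by omega)]; simp
  set x := c 0
  set y := c m
  set g := gpD d w x y with hg
  set t₀ : ℝ := (d w x - d w y + m) / 2 with ht₀
  have htri1 : d w y ≤ d w x + (m : ℝ) := by
    have := wdist_triangle hSgen w x y; rw [← hxy]; exact this
  have htri2 : d w x ≤ d w y + (m : ℝ) := by
    have h1 := wdist_triangle hSgen w y x
    rw [wdist_comm hSgen y x] at h1; rw [← hxy]; exact h1
  have ht₀0 : 0 ≤ t₀ := by rw [ht₀]; linarith
  have ht₀m : t₀ ≤ (m : ℝ) := by rw [ht₀]; linarith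
  set i := ⌊t₀⌋₊ with hi
  have him : i ≤ m := by
    have := Nat.floor_mono ht₀m
    rwa [Nat.floor_natCast] at this
  have hi_le : (i : ℝ) ≤ t₀ := Nat.floor_le ht₀0
  have hi_gt : t₀ - 1 ≤ (i : ℝ) := by
    have := Nat.lt_floor_add_one t₀
    linarith
  have hdx : d x (c i) = (i : ℝ) := by
    have := hc 0 (by omega) i him
    rw [this, abs_cast_sub_of_le (by omega)]; simp
  have hdy : d (c i) y = (m : ℝ) - i := by
    have := hc i him m le_rfl
    rw [this, abs_cast_sub_of_le him]
  refine ⟨i, him, ?_⟩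
  have h4 := hδ w x (c i) y
  have hgx : d w x - t₀ = g := by rw [hg, ht₀]; simp only [gpD, hxy]; ring
  have hgy : d w y - ((m : ℝ) - t₀) = g := by rw [hg, ht₀]; simp only [gpD, hxy]; ring
  have ha : (d w (c i) + g - 1) / 2 ≤ gpD d w x (c i) := by
    simp only [gpD, hdx]; linarith
  have hb : (d w (c i) + g - 1) / 2 ≤ gpD d w (c i) y := by
    simp only [gpD, hdy]; linarith
  have hmin : (d w (c i) + g - 1) / 2 - δ ≤ g := by
    rcases min_le_iff.mp (le_of_eq (rfl : min (gpD d w x (c i)) (gpD d w (c i) y) = _)) with _ | _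
    all_goals
      have := le_trans (le_min ha hb) (by linarith [h4] : min (gpD d w x (c i)) (gpD d w (c i) y) ≤ g + δ)
      linarith
  linarith

private lemma pdistD_le (hSgen : Subgroup.closure S = ⊤) {A : Set G} {a : G} (ha : a ∈ A)
    (x : G) : pdistD (wdist S) x A ≤ wdist S x a := by
  refine csInf_le ⟨0, ?_⟩ ⟨a, ha, rfl⟩
  rintro r ⟨b, hb, rfl⟩
  exact wdist_nonneg hSgen x b

private lemma pdist_near (hSgen : Subgroup.closure S = ⊤) {A : Set G} (hA : A.Nonempty)
    {x : G} {K : ℝ} (h : pdistD (wdist S) x A ≤ K) : ∃ a ∈ A, wdist S x a ≤ K := by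
  have hL : IsLeast {r | ∃ a ∈ A, r = wdist S x a} (pdistD (wdist S) x A) := by
    refine nat_isLeast ?_ ?_
    · obtain ⟨a, ha⟩ := hA; exact ⟨wdist S x a, a, ha, rfl⟩
    · rintro r ⟨a, ha, rfl⟩; exact wdist_nat hSgen x a
  obtain ⟨a, ha, heq⟩ := hL.1
  exact ⟨a, ha, heq ▸ h⟩

private lemma qc_nbd (hSgen : Subgroup.closure S = ⊤) {δ : ℝ}
    (hδ : DeltaHypD (wdist S) δ) {A : Set G} {C K₁ : ℝ} (hC : QCSetD (wdist S) C A)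
    {x y x' y' : G} (hx' : x' ∈ A) (hy' : y' ∈ A)
    (hxx : wdist S x x' ≤ K₁) (hyy : wdist S y y' ≤ K₁)
    {c : ℕ → G} {m : ℕ} (hc : DiscGeodD (wdist S) c m) (h0 : c 0 = x) (hm : c m = y)
    {i : ℕ} (hi : i ≤ m) :
    ∃ a ∈ A, wdist S (c i) a ≤ 2 * K₁ + (2 * δ + 1) + C := by
  set p := c i with hp
  have hpx : wdist S p x = (i : ℝ) := by
    rw [hp, ← h0, wdist_comm hSgen, hc 0 (by omega) i hi, abs_cast_sub_of_le (by omega)]; simp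
  have hpy : wdist S p y = (m : ℝ) - i := by
    rw [hp, ← hm, hc i hi m le_rfl, abs_cast_sub_of_le hi]
  have hxy : wdist S x y = (m : ℝ) := by
    rw [← h0, ← hm, hc 0 (by omega) m le_rfl, abs_cast_sub_of_le (by omega)]; simp
  have hgp : gpD (wdist S) p x' y' ≤ 2 * K₁ := by
    have t1 : wdist S p x' ≤ wdist S p x + K₁ := le_trans (wdist_triangle hSgen p x x') (by linarith)
    have t2 : wdist S p y' ≤ wdist S p y + K₁ := le_trans (wdist_triangle hSgen p y y') (by linarith)
    have t3 : wdist S x y ≤ wdist S x x' + wdist S x' y' + wdist S y' y := by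
      linarith [wdist_triangle hSgen x x' y, wdist_triangle hSgen x' y' y]
    have t4 : wdist S y' y ≤ K₁ := by rw [wdist_comm hSgen]; exact hyy
    simp only [gpD]
    linarith [hpx, hpy, hxy]
  obtain ⟨c', m', hc', h0', hm', _⟩ := exists_geod hSgen x' y'
  obtain ⟨i', hi', hclose⟩ := close_point hSgen hδ hc' p
  rw [h0', hm'] at hclose
  have hpd := hC c' m' hc' (h0'.symm ▸ hx') (hm'.symm ▸ hy') i' hi'
  obtain ⟨a, ha, hda⟩ := pdist_near hSgen ⟨x', hx'⟩ hpd
  refine ⟨a, ha, ?_⟩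
  have := wdist_triangle hSgen p (c' i') a
  linarith [hclose, hda, hgp]

end Aux2
section Aux3

open Filter

variable {G : Type*} [Group G] {S : Set G}

private lemma tendsto_pair_iff {F : ℕ × ℕ → ℝ} :
    Tendsto F atTop atTop ↔
      ∀ X : ℝ, ∃ N : ℕ, ∀ m n : ℕ, N ≤ m → N ≤ n → X ≤ F (m, n) := by
  constructor
  · intro h X
    have h' := Filter.tendsto_atTop.mp h X
    rw [Filter.eventually_atTop] at h'
    obtain ⟨a, ha⟩ := h'
    refine ⟨max a.1 a.2, fun m n hm hn => ?_⟩
    exact ha (m, n) (Prod.le_def.mpr ⟨le_trans (le_max_left _ _) hm,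
      le_trans (le_max_right _ _) hn⟩)
  · intro h
    rw [Filter.tendsto_atTop]
    intro X
    obtain ⟨N, hN⟩ := h X
    rw [Filter.eventually_atTop]
    exact ⟨(N, N), fun b hb => hN b.1 b.2 (Prod.le_def.mp hb).1 (Prod.le_def.mp hb).2⟩

private lemma bdryRel_equivalence (hSgen : Subgroup.closure S = ⊤) {δ : ℝ} (hδ0 : 0 ≤ δ)
    (hδ : DeltaHypD (wdist S) δ) (w : G) : Equivalence (bdryRelD (wdist S) w) := by
  constructor
  · intro s
    exact s.2
  · intro s t hst
    rw [bdryRelD, tendsto_pair_iff] at hst ⊢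
    intro X
    obtain ⟨N, hN⟩ := hst X
    refine ⟨N, fun m n hm hn => ?_⟩
    rw [gp_sym hSgen]
    exact hN n m hn hm
  · intro s t u hst htu
    rw [bdryRelD, tendsto_pair_iff] at hst htu ⊢
    intro X
    obtain ⟨N₁, hN₁⟩ := hst (X + δ)
    obtain ⟨N₂, hN₂⟩ := htu (X + δ)
    refine ⟨max N₁ N₂, fun m n hm hn => ?_⟩
    have h4 := hδ w (s.1 m) (t.1 (max N₁ N₂)) (u.1 n)
    have e1 : X + δ ≤ gpD (wdist S) w (s.1 m) (t.1 (max N₁ N₂)) :=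
      hN₁ m (max N₁ N₂) (le_trans (le_max_left _ _) hm) (le_max_left _ _)
    have e2 : X + δ ≤ gpD (wdist S) w (t.1 (max N₁ N₂)) (u.1 n) :=
      hN₂ (max N₁ N₂) n (le_max_right _ _) (le_trans (le_max_right _ _) hn)
    have := le_min e1 e2
    linarith
private lemma rel_of_convTo (hSgen : Subgroup.closure S = ⊤) {δ : ℝ} (hδ0 : 0 ≤ δ)
    (hδ : DeltaHypD (wdist S) δ) {w : G} {s t : ℕ → G} {ξ : BdryD (wdist S) w}
    (hs : ConvTo (wdist S) w s ξ) (ht : ConvTo (wdist S) w t ξ) :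
    Tendsto (fun p : ℕ × ℕ => gpD (wdist S) w (s p.1) (t p.2)) atTop atTop := by
  obtain ⟨hs', hsq⟩ := hs
  obtain ⟨ht', htq⟩ := ht
  have hq : Quot.mk (bdryRelD (wdist S) w) ⟨s, hs'⟩ = Quot.mk (bdryRelD (wdist S) w) ⟨t, ht'⟩ :=
    hsq.trans htq.symm
  have hrel := (Equivalence.eqvGen_iff (bdryRel_equivalence hSgen hδ0 hδ w)).mp (Quot.eq.mp hq)
  exact hrel

private lemma gp_linv_lb (hSgen : Subgroup.closure S = ⊤) (u w a b : G) :
    gpD (wdist S) w a b - wdist S w (u⁻¹ * w) ≤ gpD (wdist S) w (u * a) (u * b) := by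
  have h1 : gpD (wdist S) w (u * a) (u * b) = gpD (wdist S) (u⁻¹ * w) a b := by
    have h2 := gp_linv (S := S) u (u⁻¹ * w) a b
    rw [mul_inv_cancel_left] at h2
    exact h2
  rw [h1]
  exact gp_base hSgen (u⁻¹ * w) w a b

end Aux3
section Aux4

open Filter

variable {G : Type*} [Group G] {S : Set G} {H : Subgroup G}

private lemma self_mem_cosetSet (g : G) : g ∈ cosetSet H g := by
  show g⁻¹ * g ∈ H
  rw [inv_mul_cancel]
  exact H.one_mem

private lemma coset_qc {C : ℝ} (hH : QCSetD (wdist S) C (H : Set G)) (g : G) :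
    QCSetD (wdist S) C (cosetSet H g) := by
  intro c m hc h0 hm i hi
  have hc' : DiscGeodD (wdist S) (fun i => g⁻¹ * c i) m := by
    intro a ha b hb
    rw [wdist_linv]
    exact hc a ha b hb
  have hmem0 : (fun i => g⁻¹ * c i) 0 ∈ (H : Set G) := h0
  have hmemm : (fun i => g⁻¹ * c i) m ∈ (H : Set G) := hm
  have hClaim := hH _ m hc' hmem0 hmemm i hi
  have hpd : pdistD (wdist S) (g⁻¹ * c i) (H : Set G) = pdistD (wdist S) (c i) (cosetSet H g) := by
    unfold pdistD
    congr 1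
    ext r
    constructor
    · rintro ⟨h', hh', rfl⟩
      refine ⟨g * h', by simpa [cosetSet] using hh', ?_⟩
      have h2 := wdist_linv (S := S) g⁻¹ (c i) (g * h')
      rw [inv_mul_cancel_left] at h2
      exact h2
    · rintro ⟨a, ha, rfl⟩
      exact ⟨g⁻¹ * a, ha, (wdist_linv (S := S) g⁻¹ (c i) a).symm⟩
  rwa [hpd] at hClaim

private lemma gp_line_zero (hSgen : Subgroup.closure S = ⊤) {γ : ℤ → G}
    (hline : DiscLineD (wdist S) γ) {k i j : ℤ} (hj : j ≤ k) (hi : k ≤ i) :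
    gpD (wdist S) (γ k) (γ i) (γ j) = 0 := by
  have c1 : ((k : ℝ)) ≤ i := by exact_mod_cast hi
  have c2 : ((j : ℝ)) ≤ k := by exact_mod_cast hj
  simp only [gpD, hline k i, hline k j, hline i j]
  rw [abs_of_nonpos (by linarith), abs_of_nonneg (by linarith), abs_of_nonneg (by linarith)]
  ring

/-- Every point of the join of a coset limit set lies within `C_H + 4δ + 1` of the coset. -/
private lemma join_near_coset (hSgen : Subgroup.closure S = ⊤) {δ : ℝ} (hδ0 : 0 ≤ δ)
    (hδ : DeltaHypD (wdist S) δ) {CH : ℝ} (hH : QCSetD (wdist S) CH (H : Set G))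
    (g : G) {p : G} (hp : p ∈ cosetJoin S H g) :
    ∃ q ∈ cosetSet H g, wdist S p q ≤ CH + 4 * δ + 1 := by
  obtain ⟨γ, hline, ⟨⟨ξ, hξΛ, hconvξ⟩, ⟨η, hηΛ, hconvη⟩⟩, k, rfl⟩ := hp
  obtain ⟨sp, hspmem, hspconv⟩ := hξΛ
  obtain ⟨sm, hsmmem, hsmconv⟩ := hηΛ
  have Tp := rel_of_convTo hSgen hδ0 hδ hconvξ hspconv
  have Tm := rel_of_convTo hSgen hδ0 hδ hconvη hsmconv
  set w := γ k with hw
  have TpP : ∀ X : ℝ, ∃ N : ℕ, ∀ m n : ℕ, N ≤ m → N ≤ n →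
      X ≤ gpD (wdist S) w (γ (m : ℤ)) (sp n) := by
    intro X
    obtain ⟨N, hN⟩ := tendsto_pair_iff.mp Tp (X + wdist S 1 w)
    refine ⟨N, fun m n hm hn => ?_⟩
    have h1 := gp_base hSgen w 1 (γ (m : ℤ)) (sp n)
    have h2 := hN m n hm hn
    simp only at h2
    linarith
  have TmP : ∀ X : ℝ, ∃ N : ℕ, ∀ m n : ℕ, N ≤ m → N ≤ n →
      X ≤ gpD (wdist S) w (γ (-(m : ℤ))) (sm n) := by
    intro X
    obtain ⟨N, hN⟩ := tendsto_pair_iff.mp Tm (X + wdist S 1 w)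
    refine ⟨N, fun m n hm hn => ?_⟩
    have h1 := gp_base hSgen w 1 (γ (-(m : ℤ))) (sm n)
    have h2 := hN m n hm hn
    simp only at h2
    linarith
  obtain ⟨N₁, hN₁⟩ := TpP (2 * δ + 1)
  obtain ⟨N₂, hN₂⟩ := TmP (2 * δ + 1)
  have step1' : ∀ n' : ℕ, k ≤ (n' : ℤ) → gpD (wdist S) w (γ (n' : ℤ)) (sm N₂) ≤ δ := by
    intro n' hk
    set n'' : ℕ := N₂ + k.natAbs with hn''
    have hm2 : -(n'' : ℤ) ≤ k := by
      have : (k.natAbs : ℤ) = |k| := Int.natCast_natAbs k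
      omega
    have hge : (2 * δ + 1 : ℝ) ≤ gpD (wdist S) w (γ (-(n'' : ℤ))) (sm N₂) :=
      hN₂ n'' N₂ (by omega) le_rfl
    have h0 : gpD (wdist S) w (γ (n' : ℤ)) (γ (-(n'' : ℤ))) = 0 :=
      gp_line_zero hSgen hline hm2 hk
    have h4 := hδ w (γ (n' : ℤ)) (sm N₂) (γ (-(n'' : ℤ)))
    rw [h0] at h4
    have hsym : gpD (wdist S) w (sm N₂) (γ (-(n'' : ℤ)))
        = gpD (wdist S) w (γ (-(n'' : ℤ))) (sm N₂) := gp_sym hSgen _ _ _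
    rcases min_cases (gpD (wdist S) w (γ (n' : ℤ)) (sm N₂))
      (gpD (wdist S) w (sm N₂) (γ (-(n'' : ℤ)))) with ⟨heq, hle⟩ | ⟨heq, hle⟩
    · rw [heq] at h4; linarith
    · rw [heq, hsym] at h4; linarith
  have step1 : ∀ n : ℕ, -(n : ℤ) ≤ k → gpD (wdist S) w (γ (-(n : ℤ))) (sp N₁) ≤ δ := by
    intro n hk
    set n'' : ℕ := N₁ + k.natAbs with hn''
    have hm2 : k ≤ (n'' : ℤ) := by
      have : (k.natAbs : ℤ) = |k| := Int.natCast_natAbs k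
      omega
    have hge : (2 * δ + 1 : ℝ) ≤ gpD (wdist S) w (γ (n'' : ℤ)) (sp N₁) :=
      hN₁ n'' N₁ (by omega) le_rfl
    have h0 : gpD (wdist S) w (γ (-(n : ℤ))) (γ (n'' : ℤ)) = 0 := by
      rw [gp_sym hSgen]
      exact gp_line_zero hSgen hline hk hm2
    have h4 := hδ w (γ (-(n : ℤ))) (sp N₁) (γ (n'' : ℤ))
    rw [h0] at h4
    have hsym : gpD (wdist S) w (sp N₁) (γ (n'' : ℤ))
        = gpD (wdist S) w (γ (n'' : ℤ)) (sp N₁) := gp_sym hSgen _ _ _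
    rcases min_cases (gpD (wdist S) w (γ (-(n : ℤ))) (sp N₁))
      (gpD (wdist S) w (sp N₁) (γ (n'' : ℤ))) with ⟨heq, hle⟩ | ⟨heq, hle⟩
    · rw [heq] at h4; linarith
    · rw [heq, hsym] at h4; linarith
  have step2 : gpD (wdist S) w (sm N₂) (sp N₁) ≤ 2 * δ := by
    set n'' : ℕ := N₁ + k.natAbs with hn''
    have hm2 : k ≤ (n'' : ℤ) := by
      have : (k.natAbs : ℤ) = |k| := Int.natCast_natAbs k
      omega
    have hge : (2 * δ + 1 : ℝ) ≤ gpD (wdist S) w (γ (n'' : ℤ)) (sp N₁) :=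
      hN₁ n'' N₁ (by omega) le_rfl
    have hsmall : gpD (wdist S) w (sm N₂) (γ (n'' : ℤ)) ≤ δ := by
      rw [gp_sym hSgen]
      exact step1' n'' hm2
    have h4 := hδ w (sm N₂) (sp N₁) (γ (n'' : ℤ))
    have hsym : gpD (wdist S) w (sp N₁) (γ (n'' : ℤ))
        = gpD (wdist S) w (γ (n'' : ℤ)) (sp N₁) := gp_sym hSgen _ _ _
    rcases min_cases (gpD (wdist S) w (sm N₂) (sp N₁))
      (gpD (wdist S) w (sp N₁) (γ (n'' : ℤ))) with ⟨heq, hle⟩ | ⟨heq, hle⟩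
    · rw [heq] at h4; linarith
    · rw [heq, hsym] at h4; linarith
  obtain ⟨c, m, hc, h0c, hmc, _⟩ := exists_geod hSgen (sm N₂) (sp N₁)
  obtain ⟨i, hi, hclose⟩ := close_point hSgen hδ hc w
  rw [h0c, hmc] at hclose
  have hqc := coset_qc hH g c m hc (h0c.symm ▸ hsmmem N₂) (hmc.symm ▸ hspmem N₁) i hi
  obtain ⟨q, hq, hdq⟩ := pdist_near hSgen ⟨g, self_mem_cosetSet g⟩ hqc
  refine ⟨q, hq, ?_⟩
  have htr := wdist_triangle hSgen w (c i) q
  linarith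

end Aux4
section Aux5

open Filter

variable {G : Type*} [Group G] {S : Set G} {H : Subgroup G}

private lemma tendsto_gp_translate (hSgen : Subgroup.closure S = ⊤) (u : G) {F1 F2 : ℕ → G}
    (h : Tendsto (fun p : ℕ × ℕ => gpD (wdist S) 1 (F1 p.1) (F2 p.2)) atTop atTop) :
    Tendsto (fun p : ℕ × ℕ => gpD (wdist S) 1 (u * F1 p.1) (u * F2 p.2)) atTop atTop := by
  rw [tendsto_pair_iff] at h ⊢
  intro X
  obtain ⟨N, hN⟩ := h (X + wdist S 1 (u⁻¹ * 1))
  refine ⟨N, fun m n hm hn => ?_⟩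
  have h1 := gp_linv_lb hSgen u 1 (F1 m) (F2 n)
  have h2 := hN m n hm hn
  simp only at h2
  linarith

private lemma join_translate (hSgen : Subgroup.closure S = ⊤) {δ : ℝ} (hδ0 : 0 ≤ δ)
    (hδ : DeltaHypD (wdist S) δ) {g u : G} (hu : g⁻¹ * u * g ∈ H)
    {p : G} (hp : p ∈ cosetJoin S H g) : u * p ∈ cosetJoin S H g := by
  obtain ⟨γ, hline, ⟨hpos, hneg⟩, k, rfl⟩ := hp
  have hcoset : ∀ {s : ℕ → G}, (∀ n, s n ∈ cosetSet H g) → ∀ n, u * s n ∈ cosetSet H g := by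
    intro s hs n
    show g⁻¹ * (u * s n) ∈ H
    have he : g⁻¹ * (u * s n) = (g⁻¹ * u * g) * (g⁻¹ * s n) := by group
    rw [he]
    exact mul_mem hu (hs n)
  have hend : ∀ t : ℕ → G, (∃ ζ ∈ cosetLimitSet S H g, ConvTo (wdist S) 1 t ζ) →
      ∃ ζ ∈ cosetLimitSet S H g, ConvTo (wdist S) 1 (fun n => u * t n) ζ := by
    rintro t ⟨ζ, ⟨s, hsmem, hsconv⟩, htconv⟩
    have T := rel_of_convTo hSgen hδ0 hδ htconv hsconv
    have T' := tendsto_gp_translate hSgen u T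
    obtain ⟨hsG, -⟩ := hsconv
    obtain ⟨htG, -⟩ := htconv
    have hs'G : GromovSeqD (wdist S) 1 (fun n => u * s n) := tendsto_gp_translate hSgen u hsG
    have ht'G : GromovSeqD (wdist S) 1 (fun n => u * t n) := tendsto_gp_translate hSgen u htG
    refine ⟨Quot.mk _ ⟨fun n => u * s n, hs'G⟩,
      ⟨fun n => u * s n, fun n => hcoset hsmem n, hs'G, rfl⟩, ht'G, Quot.sound ?_⟩
    exact T'
  refine ⟨fun i => u * γ i, fun i j => by rw [wdist_linv]; exact hline i j, ⟨?_, ?_⟩, k, rfl⟩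
  · exact hend (fun n => γ (n : ℤ)) hpos
  · exact hend (fun n => γ (-(n : ℤ))) hneg

private lemma coset_near_join (hSgen : Subgroup.closure S = ⊤) {δ : ℝ} (hδ0 : 0 ≤ δ)
    (hδ : DeltaHypD (wdist S) δ) {CH : ℝ} (hH : QCSetD (wdist S) CH (H : Set G))
    {g p₀ : G} (hp₀ : p₀ ∈ cosetJoin S H g) {q : G} (hq : q ∈ cosetSet H g) :
    ∃ j ∈ cosetJoin S H g, wdist S q j ≤ CH + 4 * δ + 1 := by
  obtain ⟨q₀, hq₀, hd₀⟩ := join_near_coset hSgen hδ0 hδ hH g hp₀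
  set u := q * q₀⁻¹ with hudef
  have hu : g⁻¹ * u * g ∈ H := by
    have h1 : g⁻¹ * u * g = (g⁻¹ * q) * (g⁻¹ * q₀)⁻¹ := by rw [hudef]; group
    rw [h1]
    exact mul_mem hq (inv_mem hq₀)
  refine ⟨u * p₀, join_translate hSgen hδ0 hδ hu hp₀, ?_⟩
  have h2 := wdist_linv (S := S) u q₀ p₀
  have h3 : u * q₀ = q := by rw [hudef]; group
  rw [h3] at h2
  rw [h2, wdist_comm hSgen]
  exact hd₀

/-- Clause 1: the join of a coset limit set is uniformly quasiconvex. -/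
private lemma join_qc (hSgen : Subgroup.closure S = ⊤) {δ : ℝ} (hδ0 : 0 ≤ δ)
    (hδ : DeltaHypD (wdist S) δ) {CH : ℝ} (hH : QCSetD (wdist S) CH (H : Set G)) (g : G) :
    QCSetD (wdist S) (3 * (CH + 4 * δ + 1) + 2 * δ + 1 + CH) (cosetJoin S H g) := by
  intro c m hc h0 hm i hi
  obtain ⟨x', hx', hdx⟩ := join_near_coset hSgen hδ0 hδ hH g h0
  obtain ⟨y', hy', hdy⟩ := join_near_coset hSgen hδ0 hδ hH g hm
  obtain ⟨a, ha, hda⟩ := qc_nbd hSgen hδ (coset_qc hH g) hx' hy' hdx hdy hc rfl rfl hi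
  obtain ⟨j, hj, hdj⟩ := coset_near_join hSgen hδ0 hδ hH h0 ha
  refine le_trans (pdistD_le hSgen hj (c i)) ?_
  have htr := wdist_triangle hSgen (c i) a j
  linarith

end Aux5
section Aux6

variable {G : Type*} [Group G] {S : Set G} {H : Subgroup G}

private lemma prods_finite (hSfin : S.Finite) (N : ℕ) :
    {g : G | ∃ l : List G, (∀ x ∈ l, x ∈ S ∨ x⁻¹ ∈ S) ∧ l.length ≤ N ∧ l.prod = g}.Finite := by
  induction N with
  | zero =>
    refine Set.Finite.subset (Set.finite_singleton 1) ?_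
    rintro g ⟨l, -, hlen, hprod⟩
    have : l = [] := List.length_eq_zero_iff.mp (Nat.le_zero.mp hlen)
    subst this
    simp only [List.prod_nil] at hprod
    simp [hprod.symm]
  | succ N ih =>
    have hK : (S ∪ S⁻¹).Finite := hSfin.union hSfin.inv
    refine Set.Finite.subset (ih.union (hK.biUnion
      (fun a _ => ih.image (fun g => a * g)))) ?_
    rintro g ⟨l, hcond, hlen, hprod⟩
    cases l with
    | nil =>
      left
      exact ⟨[], by simp, by simp, hprod⟩
    | cons a t =>
      right
      have haK : a ∈ S ∪ S⁻¹ := by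
        rcases hcond a (List.mem_cons_self (a := a) (l := t)) with h | h
        · exact Or.inl h
        · exact Or.inr (Set.mem_inv.mpr h)
      refine Set.mem_biUnion haK ?_
      refine ⟨t.prod, ⟨t, fun x hx => hcond x (List.mem_cons_of_mem a hx),
        by simpa using Nat.succ_le_succ_iff.mp (by simpa using hlen), rfl⟩, ?_⟩
      rw [← hprod, List.prod_cons]

private lemma ball_finite (hSfin : S.Finite) (hSgen : Subgroup.closure S = ⊤) (ρ : ℝ) :
    {b : G | wdist S 1 b ≤ ρ}.Finite := by
  refine Set.Finite.subset (prods_finite hSfin ⌊ρ⌋₊) ?_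
  rintro b hb
  obtain ⟨l, hl, hp, hr⟩ := exists_min_word hSgen 1 b
  refine ⟨l, hl, ?_, by simpa using hp⟩
  exact Nat.le_floor (le_trans (le_of_eq hr) hb)

private lemma proj_ineq (hSgen : Subgroup.closure S = ⊤) {δ : ℝ}
    (hδ : DeltaHypD (wdist S) δ) {A : Set G} {CJ : ℝ} (hA : QCSetD (wdist S) CJ A)
    {P : G → G} (hP : IsNearestProjD (wdist S) A P) (z a : G) (ha : a ∈ A) :
    wdist S z (P z) + wdist S (P z) a ≤ wdist S z a + 2 * (CJ + 2 * δ + 1) := by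
  obtain ⟨c, m, hc, h0, hm, _⟩ := exists_geod hSgen (P z) a
  obtain ⟨i, hi, hclose⟩ := close_point hSgen hδ hc z
  rw [h0, hm] at hclose
  have hpd := hA c m hc (h0.symm ▸ (hP z).1) (hm.symm ▸ ha) i hi
  obtain ⟨a', ha', hda'⟩ := pdist_near hSgen ⟨a, ha⟩ hpd
  have hmin := (hP z).2 a' ha'
  have htr := wdist_triangle hSgen z (c i) a'
  simp only [gpD] at hclose
  linarith

end Aux6
section Aux7

variable {G : Type*} [Group G]

/-- The uniform bound on projection diameters. -/
private noncomputable def projBound (S : Set G) (δ CH : ℝ) : ℝ :=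
  (({b : G | wdist S 1 b ≤ 3 * (CH + 4 * δ + 1) + 2 * δ + 1 + CH + 2 * δ + 1 + 3 * δ + 1 +
      (3 * (CH + 4 * δ + 1) + 2 * δ + 1 + CH) + (CH + 4 * δ + 1)}.ncard ^ 2 : ℕ) : ℝ) +
    2 * (3 * (CH + 4 * δ + 1) + 2 * δ + 1 + CH + 2 * δ + 1) + 2 * δ + 2

variable {S : Set G} {H : Subgroup G}

private lemma projBound_pos {δ CH : ℝ} (hδ0 : 0 ≤ δ) (hCH0 : 0 ≤ CH) :
    0 < projBound S δ CH := by
  unfold projBound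
  have h1 : (0 : ℝ) ≤ (({b : G | wdist S 1 b ≤ 3 * (CH + 4 * δ + 1) + 2 * δ + 1 + CH + 2 * δ + 1
      + 3 * δ + 1 + (3 * (CH + 4 * δ + 1) + 2 * δ + 1 + CH) + (CH + 4 * δ + 1)}.ncard ^ 2 : ℕ) : ℝ) :=
    Nat.cast_nonneg _
  linarith

private lemma proj_bound (hSfin : S.Finite) (hSgen : Subgroup.closure S = ⊤) {δ : ℝ}
    (hδ0 : 0 ≤ δ) (hδ : DeltaHypD (wdist S) δ) {CH : ℝ} (hCH0 : 0 ≤ CH)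
    (hH : QCSetD (wdist S) CH (H : Set G)) (hmal : Malnormal H)
    {r r' : G} (hne : r⁻¹ * r' ∉ H) {P : G → G}
    (hP : IsNearestProjD (wdist S) (cosetJoin S H r) P)
    {x y : G} (hx : x ∈ cosetJoin S H r') (hy : y ∈ cosetJoin S H r') :
    wdist S (P x) (P y) < projBound S δ CH := by
  classical
  by_contra hcon
  push_neg at hcon
  unfold projBound at hcon
  set CJ : ℝ := 3 * (CH + 4 * δ + 1) + 2 * δ + 1 + CH with hCJ
  set K : ℝ := CH + 4 * δ + 1 with hK
  set E : ℝ := CJ + 2 * δ + 1 with hE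
  set ρ : ℝ := E + 3 * δ + 1 + CJ + K with hρ
  have hCJ0 : 0 ≤ CJ := by rw [hCJ, hK]; linarith
  have hK0 : 0 ≤ K := by rw [hK]; linarith
  have hE0 : 0 ≤ E := by rw [hE]; linarith
  set Bfin := (ball_finite hSfin hSgen ρ).toFinset with hBfin
  have hncard : {b : G | wdist S 1 b ≤ ρ}.ncard = Bfin.card :=
    Set.ncard_eq_toFinset_card _ (ball_finite hSfin hSgen ρ)
  set M : ℕ := Bfin.card * Bfin.card with hM
  have hMcast : (({b : G | wdist S 1 b ≤ ρ}.ncard ^ 2 : ℕ) : ℝ) = (M : ℝ) := by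
    rw [hncard, hM]; push_cast [sq]; ring
  rw [hMcast] at hcon
  -- hcon : (M : ℝ) + 2 * E + 2 * δ + 2 ≤ wdist S (P x) (P y)
  obtain ⟨c, m, hc, h0c, hmc, hmR⟩ := exists_geod hSgen (P x) (P y)
  have hmge : (M : ℝ) + 2 * E + 2 * δ + 2 ≤ (m : ℝ) := by rw [hmR]; exact hcon
  have hqcJr : QCSetD (wdist S) CJ (cosetJoin S H r) := by
    rw [hCJ, hK]; exact join_qc hSgen hδ0 hδ hH r
  have hqcJr' : QCSetD (wdist S) CJ (cosetJoin S H r') := by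
    rw [hCJ, hK]; exact join_qc hSgen hδ0 hδ hH r'
  have hprojx : wdist S x (P x) + wdist S (P x) (P y) ≤ wdist S x (P y) + 2 * E := by
    rw [hE, hCJ, hK]
    exact proj_ineq hSgen hδ (join_qc hSgen hδ0 hδ hH r) hP x (P y) (hP y).1
  have hprojy : wdist S y (P y) + wdist S (P y) (P x) ≤ wdist S y (P x) + 2 * E := by
    rw [hE, hCJ, hK]
    exact proj_ineq hSgen hδ (join_qc hSgen hδ0 hδ hH r) hP y (P x) (hP x).1
  have claim : ∀ t : ℕ, t ≤ M →
      ∃ q q' : G, q ∈ cosetSet H r ∧ q' ∈ cosetSet H r' ∧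
        wdist S (c t) q ≤ ρ ∧ wdist S (c t) q' ≤ ρ := by
    intro t htM
    have htR : (t : ℝ) ≤ (M : ℝ) := by exact_mod_cast htM
    have htm : t ≤ m := by
      have : (t : ℝ) ≤ (m : ℝ) := by linarith
      exact_mod_cast this
    have hfar : 2 * E + 2 * δ < (m : ℝ) - t := by linarith
    -- (a) near the r-coset
    have hpd := hqcJr c m hc (by rw [h0c]; exact (hP x).1) (by rw [hmc]; exact (hP y).1) t htm
    obtain ⟨j, hj, hdj⟩ := pdist_near hSgen ⟨P x, (hP x).1⟩ hpd
    obtain ⟨q, hqmem, hdq⟩ := join_near_coset hSgen hδ0 hδ hH r hj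
    have hqbound : wdist S (c t) q ≤ ρ := by
      rw [hρ]
      have htr := wdist_triangle hSgen (c t) j q
      rw [hK]
      linarith [hdj, hdq]
    -- (b) near the r'-coset
    have e1 : wdist S (P x) (P y) = (m : ℝ) := hmR.symm
    have e2 : wdist S (P x) (c t) = (t : ℝ) := by
      have h := hc 0 (Nat.zero_le m) t htm
      rw [h0c] at h
      rw [h, abs_cast_sub_of_le (Nat.zero_le t)]
      simp
    have e3 : wdist S (c t) (P y) = (m : ℝ) - t := by
      have h := hc t htm m le_rfl
      rw [hmc] at h
      rw [h, abs_cast_sub_of_le htm]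
    have c1 : wdist S (P y) (P x) = (m : ℝ) := by rw [wdist_comm hSgen]; exact e1
    have c2 : wdist S (c t) (P x) = (t : ℝ) := by rw [wdist_comm hSgen]; exact e2
    have c3 : wdist S (P y) (c t) = (m : ℝ) - t := by rw [wdist_comm hSgen]; exact e3
    have c4 : wdist S (P y) y = wdist S y (P y) := wdist_comm hSgen _ _
    have c5 : wdist S y (c t) = wdist S (c t) y := wdist_comm hSgen _ _
    have c6 : wdist S (P x) x = wdist S x (P x) := wdist_comm hSgen _ _
    have tri1 : wdist S (c t) x ≤ (t : ℝ) + wdist S x (P x) := by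
      have h := wdist_triangle hSgen (c t) (P x) x
      rw [c2, c6] at h
      exact h
    have i2 : gpD (wdist S) (P y) y (P x) ≤ E := by
      simp only [gpD]
      linarith [hprojy, c4, c1]
    have hB : gpD (wdist S) (P y) (c t) (P x) = (m : ℝ) - t := by
      simp only [gpD]
      rw [c3, c1, c2]
      linarith [e3]
    have i4 := hδ (P y) y (c t) (P x)
    have i4' : gpD (wdist S) (P y) y (c t) ≤ E + δ := by
      rcases min_cases (gpD (wdist S) (P y) y (c t)) (gpD (wdist S) (P y) (c t) (P x)) with
        ⟨heq, hle⟩ | ⟨heq, hle⟩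
      · rw [heq] at i4; linarith
      · rw [heq, hB] at i4; linarith
    have i5 : ((m : ℝ) - t) - (E + δ) ≤ gpD (wdist S) (c t) y (P y) := by
      simp only [gpD] at i4' ⊢
      have c7 : wdist S y (P y) = wdist S (P y) y := (c4).symm
      linarith [c3, c5, e3, c4, i4']
    have i6 : gpD (wdist S) (c t) x (P y) ≤ E := by
      simp only [gpD]
      linarith [tri1, e3, hprojx, e1]
    have i7 := hδ (c t) x y (P y)
    have hgpxy : gpD (wdist S) (c t) x y ≤ E + δ := by
      rcases min_cases (gpD (wdist S) (c t) x y) (gpD (wdist S) (c t) y (P y)) with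
        ⟨heq, hle⟩ | ⟨heq, hle⟩
      · rw [heq] at i7; linarith
      · rw [heq] at i7; linarith
    obtain ⟨cc, m2, hcc2, h02, hm2, _⟩ := exists_geod hSgen x y
    obtain ⟨iz, hiz, hclose2⟩ := close_point hSgen hδ hcc2 (c t)
    rw [h02, hm2] at hclose2
    have hpd2 := hqcJr' cc m2 hcc2 (by rw [h02]; exact hx) (by rw [hm2]; exact hy) iz hiz
    obtain ⟨j', hj', hdj'⟩ := pdist_near hSgen ⟨x, hx⟩ hpd2
    obtain ⟨q', hq'mem, hdq'⟩ := join_near_coset hSgen hδ0 hδ hH r' hj'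
    have hq'bound : wdist S (c t) q' ≤ ρ := by
      rw [hρ, hK]
      have htr1 := wdist_triangle hSgen (c t) (cc iz) j'
      have htr2 := wdist_triangle hSgen (c t) j' q'
      linarith [hclose2, hgpxy, hdj', hdq']
    exact ⟨q, q', hqmem, hq'mem, hqbound, hq'bound⟩
  -- pigeonhole
  have claim' : ∀ t : ℕ, ∃ q q' : G, t ≤ M →
      q ∈ cosetSet H r ∧ q' ∈ cosetSet H r' ∧
        wdist S (c t) q ≤ ρ ∧ wdist S (c t) q' ≤ ρ := by
    intro t
    by_cases h : t ≤ M
    · obtain ⟨q, q', h1, h2, h3, h4⟩ := claim t h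
      exact ⟨q, q', fun _ => ⟨h1, h2, h3, h4⟩⟩
    · exact ⟨1, 1, fun h' => absurd h' h⟩
  choose qf q'f hqf using claim'
  have hmaps : ∀ t ∈ Finset.range (M + 1),
      ((qf t)⁻¹ * c t, (q'f t)⁻¹ * c t) ∈ Bfin ×ˢ Bfin := by
    intro t htmem
    obtain ⟨h1, h2, h3, h4⟩ := hqf t (Nat.lt_succ_iff.mp (Finset.mem_range.mp htmem))
    rw [Finset.mem_product]
    constructor
    · rw [hBfin, Set.Finite.mem_toFinset]
      show wdist S 1 ((qf t)⁻¹ * c t) ≤ ρ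
      have hl := wdist_linv (S := S) (qf t) 1 ((qf t)⁻¹ * c t)
      rw [mul_one, mul_inv_cancel_left] at hl
      rw [← hl, wdist_comm hSgen]
      exact h3
    · rw [hBfin, Set.Finite.mem_toFinset]
      show wdist S 1 ((q'f t)⁻¹ * c t) ≤ ρ
      have hl := wdist_linv (S := S) (q'f t) 1 ((q'f t)⁻¹ * c t)
      rw [mul_one, mul_inv_cancel_left] at hl
      rw [← hl, wdist_comm hSgen]
      exact h4
  have hcard : (Bfin ×ˢ Bfin).card < (Finset.range (M + 1)).card := by
    rw [Finset.card_product, Finset.card_range, hM]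
    omega
  obtain ⟨t, htmem, t', ht'mem, htt', hfeq⟩ :=
    Finset.exists_ne_map_eq_of_card_lt_of_maps_to hcard hmaps
  obtain ⟨hq1, hq1', hd1, hd1'⟩ := hqf t (Nat.lt_succ_iff.mp (Finset.mem_range.mp htmem))
  obtain ⟨hq2, hq2', hd2, hd2'⟩ := hqf t' (Nat.lt_succ_iff.mp (Finset.mem_range.mp ht'mem))
  have hq1H : r⁻¹ * qf t ∈ H := hq1
  have hq2H : r⁻¹ * qf t' ∈ H := hq2
  have hq1'H : r'⁻¹ * q'f t ∈ H := hq1'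
  have hq2'H : r'⁻¹ * q'f t' ∈ H := hq2'
  have hfeq1 : (qf t)⁻¹ * c t = (qf t')⁻¹ * c t' := congrArg Prod.fst hfeq
  have hfeq2 : (q'f t)⁻¹ * c t = (q'f t')⁻¹ * c t' := congrArg Prod.snd hfeq
  have hcc : (qf t)⁻¹ * q'f t = (qf t')⁻¹ * q'f t' := by
    calc (qf t)⁻¹ * q'f t = ((qf t)⁻¹ * c t) * ((q'f t)⁻¹ * c t)⁻¹ := by group
    _ = ((qf t')⁻¹ * c t') * ((q'f t')⁻¹ * c t')⁻¹ := by rw [hfeq1, hfeq2]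
    _ = (qf t')⁻¹ * q'f t' := by group
  by_cases hc₀ : (qf t)⁻¹ * q'f t ∈ H
  · apply hne
    have hrr : r⁻¹ * r' = (r⁻¹ * qf t) * ((qf t)⁻¹ * q'f t) * (r'⁻¹ * q'f t)⁻¹ := by group
    rw [hrr]
    exact mul_mem (mul_mem hq1H hc₀) (inv_mem hq1'H)
  · have hxxH : (q'f t)⁻¹ * q'f t' ∈ H := by
      have e : (q'f t)⁻¹ * q'f t' = (r'⁻¹ * q'f t)⁻¹ * (r'⁻¹ * q'f t') := by group
      rw [e]
      exact mul_mem (inv_mem hq1'H) hq2'H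
    have hconj : ((qf t)⁻¹ * q'f t) * ((q'f t)⁻¹ * q'f t') * ((qf t)⁻¹ * q'f t)⁻¹ ∈ H := by
      have einv : ((qf t)⁻¹ * q'f t)⁻¹ = (q'f t')⁻¹ * qf t' := by rw [hcc]; group
      rw [einv]
      have e2 : ((qf t)⁻¹ * q'f t) * ((q'f t)⁻¹ * q'f t') * ((q'f t')⁻¹ * qf t') =
          (r⁻¹ * qf t)⁻¹ * (r⁻¹ * qf t') := by group
      rw [e2]
      exact mul_mem (inv_mem hq1H) hq2H
    have hxx1 := hmal _ hc₀ _ hxxH hconj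
    have hq'eq : q'f t = q'f t' := inv_mul_eq_one.mp hxx1
    have huu : c t = c t' := by
      have h := hfeq2
      rw [hq'eq] at h
      exact mul_left_cancel h
    have hMm : ∀ s : ℕ, s ≤ M → s ≤ m := by
      intro s hs
      have hsR : (s : ℝ) ≤ (M : ℝ) := by exact_mod_cast hs
      have : (s : ℝ) ≤ (m : ℝ) := by linarith
      exact_mod_cast this
    have htM := Nat.lt_succ_iff.mp (Finset.mem_range.mp htmem)
    have ht'M := Nat.lt_succ_iff.mp (Finset.mem_range.mp ht'mem)
    have hdist := hc t (hMm t htM) t' (hMm t' ht'M)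
    rw [huu, wdist_self hSgen] at hdist
    have : (t : ℝ) = t' := by
      have h := hdist.symm
      rwa [abs_eq_zero, sub_eq_zero] at h
    exact htt' (by exact_mod_cast this)

end Aux7
/-- **Corollary (cobddcor).** Let `H` be a malnormal quasiconvex subgroup of a
hyperbolic group `G` with limit set `Λ`.  Then the collection `𝒥` of joins of
distinct translates of `Λ` (one for each coset of `H`) is a mutually cobounded
collection of uniformly quasiconvex subsets of the Cayley graph: there exist
`C` and `D` such that each `J ∈ 𝒥` is `C`-quasiconvex and for distinct
`J_i, J_j ∈ 𝒥` the nearest point projection of `J_j` onto `J_i` has diameter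
less than `D`. -/
theorem malnormal_quasiconvex_joins_uniformly_cobounded
    {G : Type*} [Group G] (S : Set G) (hSfin : S.Finite)
    (hSgen : Subgroup.closure S = ⊤) (hhyp : HypD (wdist S))
    (H : Subgroup G) (hmal : Malnormal H) (hqc : QCSubgroup S H)
    (R : Set G) (hR : IsCosetReps H R) :
    ∃ C ≥ (0 : ℝ), ∃ D > (0 : ℝ),
      (∀ r : R, QCSetD (wdist S) C (cosetJoin S H (r : G))) ∧
      (∀ r r' : R, r ≠ r' →
        ∀ P : G → G, IsNearestProjD (wdist S) (cosetJoin S H (r : G)) P →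
          ∀ x ∈ cosetJoin S H (r' : G), ∀ y ∈ cosetJoin S H (r' : G),
            wdist S (P x) (P y) < D) := by
  classical
  obtain ⟨δ, hδ0, hδ⟩ := hhyp
  obtain ⟨CH, hCH0, hH⟩ := hqc
  refine ⟨3 * (CH + 4 * δ + 1) + 2 * δ + 1 + CH, by linarith, projBound S δ CH,
    projBound_pos hδ0 hCH0, ?_, ?_⟩
  · intro r
    exact join_qc hSgen hδ0 hδ hH (r : G)
  · intro r r' hrr' P hPproj x hx y hy
    have hRne : (r : G)⁻¹ * (r' : G) ∉ H := by
      intro hmem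
      obtain ⟨z, hz, huniq⟩ := hR (r : G)
      have e1 : (r : G) = z := huniq (r : G) ⟨r.2, by rw [inv_mul_cancel]; exact H.one_mem⟩
      have e2 : (r' : G) = z := huniq (r' : G) ⟨r'.2, hmem⟩
      exact hrr' (Subtype.ext (e1.trans e2.symm))
    exact proj_bound hSfin hSgen hδ0 hδ hCH0 hH hmal hRne hPproj hx hy

end RelRig
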